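/- arXiv:2604.10779 — 2 statements merged into one kernel-verified Lean document; each statement's English description precedes it below -/
import Mathlib

section
/- Let π ∈ S_n' and i, j ∈ {1,...,n}. If T_π(i) ≥_D T_π(j) in the composition diagram D(α_π), then i ≥ j. -/
noncomputable section
theorem foldrMaxMem (x : ℕ) (xs : List ℕ) : (x :: xs).foldr max 0 ∈ x :: xs := by
  induction xs generalizing x with
  | nil => simp
  | cons y ys ih =>
    rcases max_choice x ((y :: ys).foldr max 0) with h | h
    · simp only [List.foldr_cons] at h ⊢
      rw [h]; exact List.mem_cons_self
    · simp only [List.foldr_cons] at h ⊢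
      rw [h]; exact List.mem_cons_of_mem _ (ih y)
theorem takeWhileLt (l : List ℕ) (m : ℕ) (hm : m ∈ l) :
    (l.takeWhile (fun y => y ≠ m)).length < l.length := by
  have hd : l.dropWhile (fun y => y ≠ m) ≠ [] := by
    intro h; rw [List.dropWhile_eq_nil_iff] at h; simpa using h m hm
  have h1 : (l.takeWhile (fun y => y ≠ m)).length
      + (l.dropWhile (fun y => y ≠ m)).length = l.length := by
    rw [← List.length_append, List.takeWhile_append_dropWhile]
  have h2 : 0 < (l.dropWhile (fun y => y ≠ m)).length := List.length_pos_iff.mpr hd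
  omega
theorem dropWhileDropLt (l : List ℕ) (m : ℕ) (hl : l ≠ []) :
    ((l.dropWhile (fun y => y ≠ m)).drop 1).length < l.length := by
  have h1 : (l.takeWhile (fun y => y ≠ m)).length
      + (l.dropWhile (fun y => y ≠ m)).length = l.length := by
    rw [← List.length_append, List.takeWhile_append_dropWhile]
  have h2 : 0 < l.length := List.length_pos_iff.mpr hl
  rw [List.length_drop]; omega

/-- West's stack-sorting map `s`: `s([]) = []`, `s(L m R) = s(L) s(R) m` for `m` the maximum. -/
def ss : List ℕ → List ℕ
  | [] => []
  | x :: xs =>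
    ss ((x :: xs).takeWhile (fun y => y ≠ (x :: xs).foldr max 0)) ++
    ss (((x :: xs).dropWhile (fun y => y ≠ (x :: xs).foldr max 0)).drop 1) ++
    [(x :: xs).foldr max 0]
termination_by l => l.length
decreasing_by
  · exact takeWhileLt _ _ (foldrMaxMem _ _)
  · exact dropWhileDropLt _ _ (by simp)

/-- `met π` : the least `k ≥ 0` with `s^k(π)` increasing. -/
def met (l : List ℕ) : ℕ := sInf {k | List.Pairwise (· < ·) (ss^[k] l)}

/-- Right-to-left maxima of a list, read from left to right.  For the prefix of `s^{i-1}(π)`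
before `0` this is exactly the column sequence `C_{π,i}`. -/
def rtlMax : List ℕ → List ℕ
  | [] => []
  | x :: xs => if ∀ y ∈ xs, y < x then x :: rtlMax xs else rtlMax xs

/-- The blocks `b_{π,i,j}`: the segments strictly between consecutive right-to-left maxima. -/
def blocksOf : List ℕ → List (List ℕ)
  | [] => []
  | x :: xs =>
    if ∀ y ∈ xs, y < x then [] :: blocksOf xs
    else
      match blocksOf xs with
      | [] => [[x]]
      | b :: bs => (x :: b) :: bs

/-- The part of `s^{i-1}(π)` strictly before the entry `0`. -/
def prefixAt (π : List ℕ) (i : ℕ) : List ℕ := (ss^[i-1] π).takeWhile (fun x => x ≠ 0)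

/-- The column sequence `C_{π,i}`. -/
def colSeqAt (π : List ℕ) (i : ℕ) : List ℕ := rtlMax (prefixAt π i)

/-- The block sequence `B_{π,i}`. -/
def blocksAt (π : List ℕ) (i : ℕ) : List (List ℕ) := blocksOf (prefixAt π i)

/-- `col_π(v)`: the unique `i` with `v ∈ C_{π,i}` (as the least such `i ≥ 1`). -/
def colOf (π : List ℕ) (v : ℕ) : ℕ := sInf {i | 1 ≤ i ∧ v ∈ colSeqAt π i}

/-- `colpos_π(v)`: the (1-indexed) position of `v` in `C_{π,col_π(v)}`. -/
def colposOf (π : List ℕ) (v : ℕ) : ℕ := (colSeqAt π (colOf π v)).idxOf v + 1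

/-- `leftof_π(v) = c_{π,col_π(v)-1,j}` for the unique `j` with `v = max(b_{π,col_π(v)-1,j})`. -/
def leftOf (π : List ℕ) (v : ℕ) : ℕ :=
  (colSeqAt π (colOf π v - 1)).getD
    (((blocksAt π (colOf π v - 1)).map (fun b => b.foldr max 0)).idxOf v) 0

/-- `row_π(v)`: follow `leftof` back to column 1 and take `colpos` there. -/
def rowOf (π : List ℕ) (v : ℕ) : ℕ := colposOf π ((leftOf π)^[colOf π v - 1] v)

/-- `upof_π(v) = c_{π,col_π(v),colpos_π(v)-1}`. -/
def upOf (π : List ℕ) (v : ℕ) : ℕ := (colSeqAt π (colOf π v)).getD (colposOf π v - 2) 0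

/-- The stack-sorting tableau `T_π(v) = (col_π(v), row_π(v))`. -/
def Tmap (π : List ℕ) (v : ℕ) : ℕ × ℕ := (colOf π v, rowOf π v)

/-- The composition `α_π = (|{v ∈ [n] : row_π(v) = j}|)_{j=1}^{|C_{π,1}|}` (here `n = |π| - 1`). -/
def alphaOf (π : List ℕ) : List ℕ :=
  (List.range' 1 (colSeqAt π 1).length).map
    (fun j => ((Finset.Icc 1 (π.length - 1)).filter (fun v => rowOf π v = j)).card)

/-- Membership in the composition diagram `D(α) = {(i,j) : 1 ≤ j ≤ ℓ(α), 1 ≤ i ≤ α_j}`. -/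
def inDiagram (α : List ℕ) (p : ℕ × ℕ) : Prop :=
  1 ≤ p.1 ∧ 1 ≤ p.2 ∧ p.2 ≤ α.length ∧ p.1 ≤ α.getD (p.2 - 1) 0

instance inDiagramDec (α : List ℕ) : DecidablePred (inDiagram α) := fun p => by
  unfold inDiagram; infer_instance

/-- `D(α)` as a finite set. -/
def diagramFinset (α : List ℕ) : Finset (ℕ × ℕ) :=
  (Finset.range (α.foldr max 0 + 1) ×ˢ Finset.range (α.length + 1)).filter
    (fun p => inDiagram α p)

/-- `colpos_α(i,j) = |{(i,j') ∈ D(α) : j' < j} ∪ {(i,0)}|`. -/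
def colposA (α : List ℕ) (p : ℕ × ℕ) : ℕ :=
  (((Finset.range p.2).filter (fun j' => inDiagram α (p.1, j'))) ∪ {0}).card

/-- `leftof_α(i,j) = (i-1,j)`. -/
def leftA (p : ℕ × ℕ) : ℕ × ℕ := (p.1 - 1, p.2)

/-- `upof_α(i,j) = (i, max({j' < j : (i,j') ∈ D(α)} ∪ {0}))`. -/
def upA (α : List ℕ) (p : ℕ × ℕ) : ℕ × ℕ :=
  (p.1, (((Finset.range p.2).filter (fun j' => inDiagram α (p.1, j'))) ∪ {0}).sup id)

/-- The hook length `h_α(i,j)`. -/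
def hook (α : List ℕ) (p : ℕ × ℕ) : ℕ :=
  if 1 < p.1 then
    ((diagramFinset α).filter (fun q =>
      q.1 ≤ p.1 - 1 ∧ (upA α (p.1 - 1, p.2)).2 < q.2 ∧ q.2 ≤ p.2)).card
  else 1

/-- The segment `B_{π,T}(i,j,k)` of `s^{k-1}(π)`, where `U = T⁻¹`. -/
def Bseg (π : List ℕ) (α : List ℕ) (U : ℕ × ℕ → ℕ) (i j k : ℕ) : List ℕ :=
  if (upA α (leftA (i, j))).2 > 0 then
    ((ss^[k-1] π).take ((ss^[k-1] π).idxOf (U (k, j)) + 1)).drop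
      ((ss^[k-1] π).idxOf (U (k, (upA α (leftA (i, j))).2)) + 1)
  else
    (ss^[k-1] π).take ((ss^[k-1] π).idxOf (U (k, j)) + 1)

/-- The inverse `T_π⁻¹` of the stack-sorting tableau. -/
def invTmap (π : List ℕ) : ℕ × ℕ → ℕ :=
  Function.invFunOn (Tmap π) (Set.Icc 1 (π.length - 1))

/-- A linear extension of `D(α)`, encoded as the list `[T(1), …, T(n)]`:
`T` is a bijection `{1,…,n} → D(α)` with `T(a) ≥_D T(b) → a ≥ b`. -/
def isLinExt (α : List ℕ) (ℓ : List (ℕ × ℕ)) : Prop :=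
  ℓ.Nodup ∧ (∀ p, p ∈ ℓ ↔ inDiagram α p) ∧
  ∀ a b, a < ℓ.length → b < ℓ.length →
    (ℓ.getD a (0, 0)).1 ≤ (ℓ.getD b (0, 0)).1 ∧ (ℓ.getD a (0, 0)).2 ≤ (ℓ.getD b (0, 0)).2 →
    b ≤ a
end

/-!
Let `P_k` be the part of `s^k(π)` before `0`, so that `C_{π,k+1}` lists the right-to-left maxima
`c₁ > c₂ > ⋯` of `P_k` and `B_{π,k+1}` the blocks in `P_k = b₁ c₁ b₂ c₂ ⋯`. If the entries after
`0` increase, then `s(P_k 0 R) = s(b₁) s(b₂) ⋯ 0 R'` with `R'` increasing again; so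
`P_{k+1} = s(b₁) s(b₂) ⋯`, and an entry lies in column `k + 1` exactly when it is a right-to-left
maximum of `P_k`. As `s(b_j)` ends with `max b_j`, a right-to-left maximum `v` of `P_{k+1}` is the
maximum of a block `b_j` whose successors all lie below `v`, and `leftof(v) = c_j > v`. Hence
`leftof` is strictly increasing on each column and, by induction from column 1, the row strictly
decreases as the entry increases within a column. If `T_π(i) ≥ T_π(j)`, following `leftof` from
`j` back to the column of `i` reaches some `w ≥ j` in the row of `j`, and `w > i` would put `w` in a
row strictly above that of `i`; so `j ≤ w ≤ i`.
-/

open scoped List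

lemma le_foldr_max {l : List ℕ} {a : ℕ} (h : a ∈ l) : a ≤ l.foldr max 0 :=
  List.le_max_of_le h le_rfl

lemma foldr_max_le {l : List ℕ} {m : ℕ} (h : ∀ x ∈ l, x ≤ m) : l.foldr max 0 ≤ m :=
  List.max_le_of_forall_le l m h

lemma foldr_max_mem {l : List ℕ} (h : l ≠ []) : l.foldr max 0 ∈ l := by
  obtain ⟨x, xs, rfl⟩ := List.exists_cons_of_ne_nil h
  exact foldrMaxMem x xs

lemma exists_eq_append_foldr_max_cons {P : List ℕ} (hP : P ≠ []) (hnd : P.Nodup) :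
    ∃ t d, P = t ++ P.foldr max 0 :: d ∧ (∀ x ∈ t, x < P.foldr max 0) ∧
      ∀ x ∈ d, x < P.foldr max 0 := by
  obtain ⟨t, d, hP'⟩ := List.append_of_mem (foldr_max_mem hP)
  have hnd' := hP' ▸ hnd
  rw [List.nodup_middle, List.nodup_cons, List.mem_append, not_or] at hnd'
  have hlt : ∀ x ∈ P, x ≠ P.foldr max 0 → x < P.foldr max 0 :=
    fun x hx hne => lt_of_le_of_ne (le_foldr_max hx) hne
  refine ⟨t, d, hP', fun x hx => hlt x ?_ ?_, fun x hx => hlt x ?_ ?_⟩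
  · rw [hP']; exact List.mem_append_left _ hx
  · rintro rfl; exact hnd'.1.1 hx
  · rw [hP']; exact List.mem_append_right _ (List.mem_cons_of_mem _ hx)
  · rintro rfl; exact hnd'.1.2 hx

lemma eq_takeWhile_append_cons_dropWhile {l : List ℕ} {m : ℕ} (hm : m ∈ l) :
    l = l.takeWhile (· ≠ m) ++ m :: (l.dropWhile (· ≠ m)).drop 1 := by
  have hne : l.dropWhile (· ≠ m) ≠ [] := by
    intro h
    simpa using List.dropWhile_eq_nil_iff.mp h m hm
  have hhead : (l.dropWhile (· ≠ m)).head hne = m := by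
    simpa using List.head_dropWhile_not (fun y => decide (y ≠ m)) hne
  conv_lhs => rw [← List.takeWhile_append_dropWhile (p := (· ≠ m)) (l := l),
    ← List.cons_head_tail hne, hhead]
  rw [List.drop_one]

lemma ss_nil : ss [] = [] := by rw [ss]

lemma ss_append_cons {L R : List ℕ} {m : ℕ} (hL : ∀ x ∈ L, x < m) (hR : ∀ x ∈ R, x < m) :
    ss (L ++ m :: R) = ss L ++ ss R ++ [m] := by
  have hmax : (L ++ m :: R).foldr max 0 = m :=
    le_antisymm (foldr_max_le fun x hx => by
      rcases List.mem_append.mp hx with hx | hx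
      · exact (hL x hx).le
      · rcases List.mem_cons.mp hx with rfl | hx
        exacts [le_rfl, (hR x hx).le]) (le_foldr_max (by simp))
  have hpos : ∀ x ∈ L, decide (x ≠ m) = true := fun x hx => by simpa using (hL x hx).ne
  obtain ⟨x, xs, hx⟩ := List.exists_cons_of_ne_nil (List.append_ne_nil_of_right_ne_nil L
    (List.cons_ne_nil m R))
  rw [hx, ss, ← hx, hmax, List.takeWhile_append_of_pos hpos, List.dropWhile_append_of_pos hpos]
  simp

lemma ss_append_singleton {L : List ℕ} {m : ℕ} (hL : ∀ x ∈ L, x < m) :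
    ss (L ++ [m]) = ss L ++ [m] := by
  rw [ss_append_cons hL (by simp), ss_nil, List.append_nil]

lemma ss_singleton (a : ℕ) : ss [a] = [a] := by
  simpa [ss_nil] using ss_append_cons (L := []) (R := []) (m := a) (by simp) (by simp)

lemma ss_perm (l : List ℕ) : ss l ~ l := by
  fun_induction ss l with
  | case1 => rfl
  | case2 x xs ih₁ ih₂ =>
    calc _ ~ _ ++ _ ++ [_] := (ih₁.append ih₂).append_right _
      _ ~ _ ++ _ :: _ := by
        rw [List.append_assoc]; exact (List.perm_append_singleton _ _).append_left _
      _ = x :: xs :=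
        (eq_takeWhile_append_cons_dropWhile (foldr_max_mem (List.cons_ne_nil x xs))).symm

lemma mem_ss {l : List ℕ} {a : ℕ} : a ∈ ss l ↔ a ∈ l := (ss_perm l).mem_iff

lemma exists_ss_eq_append_foldr_max {l : List ℕ} (hl : l ≠ []) :
    ∃ t, ss l = t ++ [l.foldr max 0] := by
  obtain ⟨x, xs, rfl⟩ := List.exists_cons_of_ne_nil hl
  rw [ss]
  exact ⟨_, rfl⟩

lemma flatten_map_ss_perm (L : List (List ℕ)) : (L.map ss).flatten ~ L.flatten := by
  induction L with
  | nil => rfl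
  | cons b L ih => simpa using (ss_perm b).append ih

lemma ss_iterate_perm (l : List ℕ) (k : ℕ) : ss^[k] l ~ l := by
  induction k with
  | zero => rfl
  | succ k ih => rw [Function.iterate_succ_apply']; exact (ss_perm _).trans ih

lemma nodup_ss_iterate {π : List ℕ} (hπ : π.Nodup) (k : ℕ) : (ss^[k] π).Nodup :=
  (ss_iterate_perm π k).nodup_iff.mpr hπ

lemma rtlMax_cons_of_forall_lt {x : ℕ} {xs : List ℕ} (h : ∀ y ∈ xs, y < x) :
    rtlMax (x :: xs) = x :: rtlMax xs := by
  rw [rtlMax, if_pos h]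

lemma rtlMax_cons_of_not_forall_lt {x : ℕ} {xs : List ℕ} (h : ¬ ∀ y ∈ xs, y < x) :
    rtlMax (x :: xs) = rtlMax xs := by
  rw [rtlMax, if_neg h]

lemma mem_rtlMax_cons {a v : ℕ} {l : List ℕ} :
    v ∈ rtlMax (a :: l) ↔ (v = a ∧ ∀ y ∈ l, y < a) ∨ v ∈ rtlMax l := by
  rw [rtlMax]
  split_ifs with h
  · simp only [List.mem_cons, and_iff_left h]
  · simp [h]

lemma mem_of_mem_rtlMax {l : List ℕ} {v : ℕ} (h : v ∈ rtlMax l) : v ∈ l := by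
  induction l with
  | nil => simp [rtlMax] at h
  | cons a l ih =>
    rcases mem_rtlMax_cons.mp h with ⟨rfl, -⟩ | h
    exacts [List.mem_cons_self, List.mem_cons_of_mem _ (ih h)]

lemma mem_rtlMax_append {l₁ l₂ : List ℕ} {v : ℕ} :
    v ∈ rtlMax (l₁ ++ l₂) ↔ (v ∈ rtlMax l₁ ∧ ∀ y ∈ l₂, y < v) ∨ v ∈ rtlMax l₂ := by
  induction l₁ with
  | nil => simp [rtlMax]
  | cons a l₁ ih =>
    rw [List.cons_append, mem_rtlMax_cons, mem_rtlMax_cons, ih]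
    constructor
    · rintro (⟨rfl, h⟩ | h | h)
      · exact .inl ⟨.inl ⟨rfl, fun y hy => h y (List.mem_append_left _ hy)⟩,
          fun y hy => h y (List.mem_append_right _ hy)⟩
      · exact .inl ⟨.inr h.1, h.2⟩
      · exact .inr h
    · rintro (⟨⟨rfl, h⟩ | h, h'⟩ | h)
      · exact .inl ⟨rfl, fun y hy => (List.mem_append.mp hy).elim (h y) (h' y)⟩
      · exact .inr (.inl ⟨h, h'⟩)
      · exact .inr (.inr h)

lemma mem_rtlMax_flatten {L : List (List ℕ)} {v : ℕ} (h : v ∈ rtlMax L.flatten) :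
    ∃ j, ∃ hj : j < L.length, v ∈ rtlMax L[j] ∧ ∀ y ∈ (L.drop (j + 1)).flatten, y < v := by
  induction L with
  | nil => simp [rtlMax] at h
  | cons b L ih =>
    rcases mem_rtlMax_append.mp h with ⟨hb, hL⟩ | hL
    · exact ⟨0, by simp, hb, hL⟩
    · obtain ⟨j, hj, hv, hlt⟩ := ih hL
      exact ⟨j + 1, by simpa using hj, hv, hlt⟩

lemma rtlMax_pairwise (l : List ℕ) : (rtlMax l).Pairwise (· > ·) := by
  induction l with
  | nil => simp [rtlMax]
  | cons a l ih =>
    rw [rtlMax]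
    split_ifs with h
    · exact ih.cons fun y hy => h y (mem_of_mem_rtlMax hy)
    · exact ih

lemma rtlMax_ne_nil {l : List ℕ} (h : l ≠ []) : rtlMax l ≠ [] := by
  obtain ⟨l', a, rfl⟩ := (List.eq_nil_or_concat l).resolve_left h
  rw [List.concat_eq_append]
  exact List.ne_nil_of_mem (a := a) (mem_rtlMax_append.mpr (.inr (by simp [rtlMax])))

lemma le_getD_rtlMax_zero {l : List ℕ} {y : ℕ} (hy : y ∈ l) : y ≤ (rtlMax l).getD 0 0 := by
  induction l generalizing y with
  | nil => simp at hy
  | cons a l ih =>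
    by_cases h : ∀ y ∈ l, y < a
    · rw [rtlMax_cons_of_forall_lt h]
      rcases List.mem_cons.mp hy with rfl | hy
      exacts [le_rfl, (h y hy).le]
    · rw [rtlMax_cons_of_not_forall_lt h]
      obtain ⟨y', hy', hay'⟩ : ∃ y' ∈ l, a ≤ y' := by simpa using h
      rcases List.mem_cons.mp hy with rfl | hy
      exacts [hay'.trans (ih hy'), ih hy]

lemma eq_foldr_max_of_mem_rtlMax_ss {l : List ℕ} {v : ℕ} (h : v ∈ rtlMax (ss l)) :
    v = l.foldr max 0 := by
  rcases eq_or_ne l [] with rfl | hl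
  · simp [ss_nil, rtlMax] at h
  obtain ⟨t, ht⟩ := exists_ss_eq_append_foldr_max hl
  rw [ht, mem_rtlMax_append] at h
  rcases h with ⟨hv, hlt⟩ | h
  · have : v ≤ l.foldr max 0 :=
      le_foldr_max (mem_ss.mp (ht ▸ List.mem_append_left _ (mem_of_mem_rtlMax hv)))
    exact absurd (hlt _ (List.mem_singleton_self _)) this.not_gt
  · simpa [mem_rtlMax_cons, rtlMax] using h

lemma idxOf_lt_idxOf_of_pairwise_gt {l : List ℕ} (hl : l.Pairwise (· > ·)) {v w : ℕ}
    (hv : v ∈ l) (hw : w ∈ l) (hwv : w < v) : l.idxOf v < l.idxOf w := by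
  induction l with
  | nil => simp at hv
  | cons a l ih =>
    rw [List.pairwise_cons] at hl
    have hwa : w ≠ a := by
      rintro rfl
      rcases List.mem_cons.mp hv with rfl | hv
      exacts [hwv.false, (hl.1 v hv).asymm hwv]
    have hw' := (List.mem_cons.mp hw).resolve_left hwa
    rw [List.idxOf_cons_ne _ (Ne.symm hwa)]
    rcases eq_or_ne v a with rfl | hva
    · simp
    · rw [List.idxOf_cons_ne _ (Ne.symm hva)]
      exact Nat.succ_lt_succ (ih hl.2 ((List.mem_cons.mp hv).resolve_left hva) hw')

lemma blocksOf_cons_of_forall_lt {x : ℕ} {xs : List ℕ} (h : ∀ y ∈ xs, y < x) :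
    blocksOf (x :: xs) = [] :: blocksOf xs := by
  rw [blocksOf, if_pos h]

lemma blocksOf_cons_of_not_forall_lt {x : ℕ} {xs : List ℕ} (h : ¬ ∀ y ∈ xs, y < x) :
    blocksOf (x :: xs) = (x :: (blocksOf xs).headD []) :: (blocksOf xs).tail := by
  rw [blocksOf, if_neg h]
  cases blocksOf xs <;> rfl

lemma blocksOf_append_cons {A B : List ℕ} {m : ℕ} (hA : ∀ x ∈ A, x < m) (hB : ∀ x ∈ B, x < m) :
    blocksOf (A ++ m :: B) = A :: blocksOf B := by
  induction A with
  | nil => rw [List.nil_append, blocksOf_cons_of_forall_lt hB]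
  | cons a A ih =>
    rw [List.cons_append, blocksOf_cons_of_not_forall_lt, ih fun x hx => hA x (by simp [hx])]
    · rfl
    · exact fun h => (h m (by simp)).not_gt (hA a List.mem_cons_self)

lemma length_blocksOf (l : List ℕ) : (blocksOf l).length = (rtlMax l).length := by
  induction l with
  | nil => simp [blocksOf, rtlMax]
  | cons x xs ih =>
    by_cases h : ∀ y ∈ xs, y < x
    · simp [blocksOf_cons_of_forall_lt h, rtlMax_cons_of_forall_lt h, ih]
    · have hxs : xs ≠ [] := by rintro rfl; simp at h
      obtain ⟨b, bs, hb⟩ : ∃ b bs, blocksOf xs = b :: bs := by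
        refine List.exists_cons_of_ne_nil ?_
        rw [← List.length_pos_iff, ih, List.length_pos_iff]
        exact rtlMax_ne_nil hxs
      rw [blocksOf_cons_of_not_forall_lt h, rtlMax_cons_of_not_forall_lt h, ← ih, hb]
      rfl

lemma blocksOf_ne_nil {l : List ℕ} (h : l ≠ []) : blocksOf l ≠ [] := by
  rw [← List.length_pos_iff, length_blocksOf, List.length_pos_iff]
  exact rtlMax_ne_nil h

lemma rtlMax_append_flatten_blocksOf_perm (l : List ℕ) :
    rtlMax l ++ (blocksOf l).flatten ~ l := by
  induction l with
  | nil => simp [blocksOf, rtlMax]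
  | cons x xs ih =>
    by_cases h : ∀ y ∈ xs, y < x
    · simpa [blocksOf_cons_of_forall_lt h, rtlMax_cons_of_forall_lt h] using ih
    · rw [blocksOf_cons_of_not_forall_lt h, rtlMax_cons_of_not_forall_lt h]
      have hflat : (blocksOf xs).headD [] ++ (blocksOf xs).tail.flatten =
          (blocksOf xs).flatten := by
        cases blocksOf xs <;> simp
      rw [List.flatten_cons, List.cons_append, hflat]
      exact List.perm_middle.trans (ih.cons x)

lemma le_getD_rtlMax_of_mem_getD_blocksOf {l : List ℕ} {j x : ℕ}
    (hx : x ∈ (blocksOf l).getD j []) : x ≤ (rtlMax l).getD j 0 := by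
  induction l generalizing j with
  | nil => simp [blocksOf] at hx
  | cons z xs ih =>
    by_cases h : ∀ y ∈ xs, y < z
    · rw [blocksOf_cons_of_forall_lt h] at hx
      rw [rtlMax_cons_of_forall_lt h]
      cases j with
      | zero => simp at hx
      | succ j => exact ih (by simpa using hx)
    · have hxs : xs ≠ [] := by rintro rfl; simp at h
      obtain ⟨b, bs, hb⟩ := List.exists_cons_of_ne_nil (blocksOf_ne_nil hxs)
      rw [blocksOf_cons_of_not_forall_lt h, hb] at hx
      rw [hb] at ih
      rw [rtlMax_cons_of_not_forall_lt h]
      cases j with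
      | zero =>
        rcases List.mem_cons.mp (by simpa using hx) with rfl | hx
        · obtain ⟨y, hy, hxy⟩ : ∃ y ∈ xs, x ≤ y := by simpa using h
          exact hxy.trans (le_getD_rtlMax_zero hy)
        · exact ih (j := 0) (by simpa using hx)
      | succ j => exact ih (by simpa using hx)

lemma mem_of_mem_flatten_map_ss_blocksOf {P : List ℕ} {x : ℕ}
    (h : x ∈ ((blocksOf P).map ss).flatten) : x ∈ P :=
  (rtlMax_append_flatten_blocksOf_perm P).subset
    (List.mem_append_right _ ((flatten_map_ss_perm _).subset h))

def blockIdx (P : List ℕ) (v : ℕ) : ℕ := ((blocksOf P).map (fun b => b.foldr max 0)).idxOf v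

lemma idxOf_map_foldr_max {B : List (List ℕ)} (hB : B.flatten.Nodup) {j v : ℕ}
    (hj : j < B.length) (hv : v ∈ B[j]) (hv0 : v ≠ 0) (hmax : B[j].foldr max 0 = v) :
    (B.map (fun b => b.foldr max 0)).idxOf v = j := by
  have hsplit : B = B.take j ++ B[j] :: B.drop (j + 1) := by
    rw [← List.drop_eq_getElem_cons hj, List.take_append_drop]
  -- `hv0` is needed because an empty block also has `foldr max 0` equal to `0`.
  have hnotMem : v ∉ (B.take j).map (fun b => b.foldr max 0) := by
    rintro hmem
    obtain ⟨b, hb, hbv⟩ := List.mem_map.mp hmem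
    have hbne : b ≠ [] := by rintro rfl; exact hv0 hbv.symm
    rw [hsplit, List.flatten_append, List.nodup_append] at hB
    exact hB.2.2 v (List.mem_flatten.mpr ⟨b, hb, hbv ▸ foldr_max_mem hbne⟩) v
      (List.mem_flatten.mpr ⟨B[j], List.mem_cons_self, hv⟩) rfl
  rw [hsplit, List.map_append, List.map_cons, List.idxOf_append_of_notMem hnotMem, hmax,
    List.idxOf_cons_self]
  simp [hj.le]

lemma blockIdx_spec {P : List ℕ} (hP : P.Nodup) (h0 : 0 ∉ P) {v : ℕ}
    (hv : v ∈ rtlMax ((blocksOf P).map ss).flatten) :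
    blockIdx P v < (rtlMax P).length ∧ v ∈ (blocksOf P).getD (blockIdx P v) [] ∧
      ((blocksOf P).getD (blockIdx P v) []).foldr max 0 = v ∧
      ∀ j, blockIdx P v < j → ∀ x ∈ (blocksOf P).getD j [], x < v := by
  obtain ⟨j, hj, hvj, hlt⟩ := mem_rtlMax_flatten hv
  rw [List.length_map] at hj
  rw [List.getElem_map] at hvj
  have hmax := (eq_foldr_max_of_mem_rtlMax_ss hvj).symm
  have hvB := mem_ss.mp (mem_of_mem_rtlMax hvj)
  have hB : (blocksOf P).flatten.Nodup :=
    ((rtlMax_append_flatten_blocksOf_perm P).nodup_iff.mpr hP).sublist (by simp)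
  have hidx : blockIdx P v = j :=
    idxOf_map_foldr_max hB hj hvB (ne_of_mem_of_not_mem (mem_of_mem_flatten_map_ss_blocksOf
      (mem_of_mem_rtlMax hv)) h0) hmax
  rw [hidx, List.getD_eq_getElem _ _ hj, ← length_blocksOf]
  refine ⟨hj, hvB, hmax, fun j' hjj' x hx => hlt x ?_⟩
  rcases lt_or_ge j' (blocksOf P).length with hj' | hj'
  · rw [List.getD_eq_getElem _ _ hj'] at hx
    refine List.mem_flatten.mpr ⟨ss (blocksOf P)[j'], List.mem_drop_iff_getElem.mpr
      ⟨j' - (j + 1), by simp; omega, by simp [Nat.add_sub_cancel' hjj']⟩, mem_ss.mpr hx⟩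
  · rw [List.getD_eq_default _ _ hj'] at hx
    simp at hx

lemma pairwise_append_singleton {R : List ℕ} {a : ℕ} (hR : R.Pairwise (· < ·))
    (h : ∀ x ∈ R, x < a) : (R ++ [a]).Pairwise (· < ·) :=
  List.pairwise_append.mpr ⟨hR, by simp, fun x hx y hy => List.mem_singleton.mp hy ▸ h x hx⟩

lemma forall_lt_or_eq_append_singleton {R : List ℕ} {m : ℕ} (hR : R.Pairwise (· < ·))
    (hm : m ∉ R) :
    (∀ x ∈ R, x < m) ∨ ∃ R₀ r, R = R₀ ++ [r] ∧ m < r ∧ ∀ x ∈ R₀, x < r := by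
  rcases R.eq_nil_or_concat with rfl | ⟨R₀, r, rfl⟩
  · simp
  rw [List.concat_eq_append] at hR hm ⊢
  have hR₀ : ∀ x ∈ R₀, x < r := fun x hx => (List.pairwise_append.mp hR).2.2 x hx r (by simp)
  rcases lt_or_gt_of_ne (show r ≠ m by rintro rfl; simp at hm) with hrm | hmr
  · left
    intro x hx
    rcases List.mem_append.mp hx with hx | hx
    exacts [(hR₀ x hx).trans hrm, List.mem_singleton.mp hx ▸ hrm]
  · exact .inr ⟨R₀, r, rfl, hmr, hR₀⟩

lemma ss_append_zero_cons {P R : List ℕ} (hnd : (P ++ 0 :: R).Nodup)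
    (hR : R.Pairwise (· < ·)) :
    ∃ R', R'.Pairwise (· < ·) ∧ ss (P ++ 0 :: R) = ((blocksOf P).map ss).flatten ++ 0 :: R' := by
  induction hN : P.length + R.length using Nat.strong_induction_on generalizing P R with
  | _ N ih =>
  have h0 : 0 ∉ P ∧ 0 ∉ R := by
    rw [List.nodup_middle, List.nodup_cons, List.mem_append] at hnd; tauto
  set m := P.foldr max 0 with hm
  have hmR : m ∉ R := by
    rcases eq_or_ne P [] with hP | hP
    · simpa [m, hP] using h0.2
    · exact fun hmR => (List.nodup_append.mp hnd).2.2 m (foldr_max_mem hP) m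
        (List.mem_cons_of_mem _ hmR) rfl
  -- Either `R` lies below `m = max P`, and `P = t m d` gives `s(P 0 R) = s(t) s(d 0 R) m`, or the
  -- last entry of `R` exceeds everything and stays last under `s`.
  rcases forall_lt_or_eq_append_singleton hR hmR with hRm | ⟨R₀, r, rfl, hmr, hR₀⟩
  · rcases eq_or_ne P [] with rfl | hP
    · obtain rfl : R = [] :=
        List.eq_nil_iff_forall_not_mem.mpr fun x hx => by simpa [m] using hRm x hx
      exact ⟨[], by simp, by simp [blocksOf, ss_singleton]⟩
    obtain ⟨t, d, hPtd, ht, hd⟩ := exists_eq_append_foldr_max_cons hP (hnd.sublist (by simp))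
    rw [← hm] at hPtd ht hd
    have hm0 : 0 < m := Nat.pos_of_ne_zero fun h => h0.1 (h ▸ foldr_max_mem hP)
    have hlt : ∀ x ∈ d ++ 0 :: R, x < m := by
      simp only [List.mem_append, List.mem_cons]
      rintro x (hx | rfl | hx)
      exacts [hd x hx, hm0, hRm x hx]
    have hsplit : P ++ 0 :: R = t ++ m :: (d ++ 0 :: R) := by rw [hPtd]; simp
    obtain ⟨R₂, hR₂, hss⟩ := ih (d.length + R.length)
      (by rw [← hN, hPtd]; simp; omega) (hnd.sublist (by rw [hsplit]; simp)) hR rfl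
    refine ⟨R₂ ++ [m], pairwise_append_singleton hR₂ fun x hx =>
      hlt x (mem_ss.mp (by simp [hss, hx])), ?_⟩
    rw [hsplit, ss_append_cons ht hlt, hss, hPtd, blocksOf_append_cons ht hd]
    simp
  · have hr : ∀ x ∈ P ++ 0 :: R₀, x < r := by
      simp only [List.mem_append, List.mem_cons]
      rintro x (hx | rfl | hx)
      · exact (le_foldr_max hx).trans_lt hmr
      · exact Nat.pos_of_ne_zero fun h => h0.2 (by simp [h])
      · exact hR₀ x hx
    obtain ⟨R₂, hR₂, hss⟩ := ih (P.length + R₀.length) (by simp [← hN])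
      (hnd.sublist (by simp)) (List.pairwise_append.mp hR).1 rfl
    refine ⟨R₂ ++ [r], pairwise_append_singleton hR₂ fun x hx =>
      hr x (mem_ss.mp (by simp [hss, hx])), ?_⟩
    rw [show P ++ 0 :: (R₀ ++ [r]) = (P ++ 0 :: R₀) ++ [r] by simp, ss_append_singleton hr, hss]
    simp

lemma zero_notMem_prefixAt (π : List ℕ) (i : ℕ) : 0 ∉ prefixAt π i := by
  intro h
  simpa using List.mem_takeWhile_imp h

lemma zero_notMem_flatten_map_ss_blocksAt (π : List ℕ) (i : ℕ) :
    0 ∉ ((blocksAt π i).map ss).flatten :=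
  fun h => zero_notMem_prefixAt π i (mem_of_mem_flatten_map_ss_blocksOf h)

lemma nodup_prefixAt {π : List ℕ} (hπ : π.Nodup) (i : ℕ) : (prefixAt π i).Nodup :=
  (List.takeWhile_sublist _).nodup (nodup_ss_iterate hπ _)

lemma prefixAt_eq_of_ss_iterate_eq {π P R : List ℕ} {k : ℕ}
    (h : ss^[k] π = P ++ 0 :: R) (hP : 0 ∉ P) : prefixAt π (k + 1) = P := by
  rw [prefixAt, Nat.add_sub_cancel, h,
    List.takeWhile_append_of_pos fun x hx => by simpa using ne_of_mem_of_not_mem hx hP]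
  simp

section Tableau

variable {π : List ℕ} (hπ : π.Nodup) (h0 : π.getLast? = some 0)
include hπ h0

lemma prefixAt_one_append_zero : prefixAt π 1 ++ [0] = π := by
  have hsplit : π = π.dropLast ++ [0] := (List.dropLast_append_getLast? 0 h0).symm
  have h0π : 0 ∉ π.dropLast := by
    rw [hsplit] at hπ
    exact fun h => (List.nodup_append.mp hπ).2.2 0 h 0 (by simp) rfl
  rw [prefixAt_eq_of_ss_iterate_eq (k := 0) hsplit h0π, ← hsplit]

lemma mem_prefixAt_one {v : ℕ} (hv : v ∈ π) (hv0 : v ≠ 0) : v ∈ prefixAt π 1 := by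
  rw [← prefixAt_one_append_zero hπ h0] at hv
  simpa [hv0] using hv

omit h0 in
lemma exists_ss_iterate_succ_eq {k : ℕ} {R : List ℕ} (hR : R.Pairwise (· < ·))
    (hk : ss^[k] π = prefixAt π (k + 1) ++ 0 :: R) :
    ∃ R', R'.Pairwise (· < ·) ∧
      ss^[k + 1] π = ((blocksAt π (k + 1)).map ss).flatten ++ 0 :: R' := by
  obtain ⟨R', hR', hss⟩ := ss_append_zero_cons (hk ▸ nodup_ss_iterate hπ k) hR
  exact ⟨R', hR', by rw [Function.iterate_succ_apply', hk, hss]; rfl⟩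

lemma exists_ss_iterate_eq (k : ℕ) :
    ∃ R, R.Pairwise (· < ·) ∧ ss^[k] π = prefixAt π (k + 1) ++ 0 :: R := by
  induction k with
  | zero => exact ⟨[], by simp, (prefixAt_one_append_zero hπ h0).symm⟩
  | succ k ih =>
    obtain ⟨R, hR, hk⟩ := ih
    obtain ⟨R', hR', hk'⟩ := exists_ss_iterate_succ_eq hπ hR hk
    rw [prefixAt_eq_of_ss_iterate_eq hk' (zero_notMem_flatten_map_ss_blocksAt π (k + 1))]
    exact ⟨R', hR', hk'⟩

lemma prefixAt_succ_succ (k : ℕ) :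
    prefixAt π (k + 2) = ((blocksAt π (k + 1)).map ss).flatten := by
  obtain ⟨R, hR, hk⟩ := exists_ss_iterate_eq hπ h0 k
  obtain ⟨R', -, hk'⟩ := exists_ss_iterate_succ_eq hπ hR hk
  exact prefixAt_eq_of_ss_iterate_eq hk' (zero_notMem_flatten_map_ss_blocksAt π (k + 1))

lemma prefixAt_succ_succ_perm (k : ℕ) :
    colSeqAt π (k + 1) ++ prefixAt π (k + 2) ~ prefixAt π (k + 1) := by
  rw [prefixAt_succ_succ hπ h0]
  exact ((flatten_map_ss_perm _).append_left _).trans (rtlMax_append_flatten_blocksOf_perm _)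

lemma mem_prefixAt_succ_succ_iff {k x : ℕ} :
    x ∈ prefixAt π (k + 2) ↔ x ∈ prefixAt π (k + 1) ∧ x ∉ colSeqAt π (k + 1) := by
  have hperm := prefixAt_succ_succ_perm hπ h0 k
  have hdisj := List.disjoint_of_nodup_append (hperm.nodup_iff.mpr (nodup_prefixAt hπ _))
  rw [← hperm.mem_iff, List.mem_append]
  exact ⟨fun h => ⟨.inr h, fun h' => hdisj h' h⟩, fun ⟨h, h'⟩ => h.resolve_left h'⟩

lemma mem_prefixAt_of_le {k k' x : ℕ} (hk : k ≤ k') (hx : x ∈ prefixAt π (k' + 1)) :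
    x ∈ prefixAt π (k + 1) := by
  induction k', hk using Nat.le_induction with
  | base => exact hx
  | succ k' _ ih => exact ih ((mem_prefixAt_succ_succ_iff hπ h0).mp hx).1

lemma colOf_eq_of_mem_colSeqAt {k v : ℕ} (hv : v ∈ colSeqAt π (k + 1)) : colOf π v = k + 1 := by
  refine le_antisymm (Nat.sInf_le ⟨by omega, hv⟩) (le_csInf ⟨_, by omega, hv⟩ ?_)
  rintro i ⟨hi, hvi⟩
  obtain ⟨a, rfl⟩ := Nat.exists_eq_add_of_le' hi
  by_contra! hlt
  have hv' := mem_prefixAt_of_le hπ h0 (show a + 1 ≤ k by omega) (mem_of_mem_rtlMax hv)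
  exact ((mem_prefixAt_succ_succ_iff hπ h0).mp hv').2 hvi

lemma exists_mem_colSeqAt {k v : ℕ} (hv : v ∈ prefixAt π (k + 1)) :
    ∃ k', v ∈ colSeqAt π (k' + 1) := by
  induction hN : (prefixAt π (k + 1)).length using Nat.strong_induction_on generalizing k with
  | _ N ih =>
  by_cases hvk : v ∈ colSeqAt π (k + 1)
  · exact ⟨k, hvk⟩
  have hlen : (colSeqAt π (k + 1) ++ prefixAt π (k + 1 + 1)).length = N :=
    hN ▸ (prefixAt_succ_succ_perm hπ h0 k).length_eq
  have hC : colSeqAt π (k + 1) ≠ [] := rtlMax_ne_nil (List.ne_nil_of_mem hv)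
  rw [List.length_append] at hlen
  have := List.length_pos_iff.mpr hC
  exact ih _ (by omega) ((mem_prefixAt_succ_succ_iff hπ h0).mpr ⟨hv, hvk⟩) rfl

lemma leftOf_eq {k v : ℕ} (hv : v ∈ colSeqAt π (k + 2)) :
    leftOf π v = (colSeqAt π (k + 1)).getD (blockIdx (prefixAt π (k + 1)) v) 0 := by
  rw [leftOf, colOf_eq_of_mem_colSeqAt hπ h0 hv]
  rfl

lemma blockIdx_prefixAt_spec {k v : ℕ} (hv : v ∈ colSeqAt π (k + 2)) :
    let B := blocksAt π (k + 1); let j := blockIdx (prefixAt π (k + 1)) v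
    j < (colSeqAt π (k + 1)).length ∧ v ∈ B.getD j [] ∧ (B.getD j []).foldr max 0 = v ∧
      ∀ j', j < j' → ∀ x ∈ B.getD j' [], x < v :=
  blockIdx_spec (nodup_prefixAt hπ _) (zero_notMem_prefixAt _ _)
    (show v ∈ rtlMax ((blocksAt π (k + 1)).map ss).flatten by
      rw [← prefixAt_succ_succ hπ h0]; exact hv)

lemma leftOf_mem_colSeqAt {k v : ℕ} (hv : v ∈ colSeqAt π (k + 2)) :
    leftOf π v ∈ colSeqAt π (k + 1) := by
  have hlt := (blockIdx_prefixAt_spec hπ h0 hv).1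
  rw [leftOf_eq hπ h0 hv, List.getD_eq_getElem (colSeqAt π (k + 1)) 0 hlt]
  exact List.getElem_mem hlt

lemma le_leftOf {k v : ℕ} (hv : v ∈ colSeqAt π (k + 2)) : v ≤ leftOf π v := by
  rw [leftOf_eq hπ h0 hv]
  exact le_getD_rtlMax_of_mem_getD_blocksOf (blockIdx_prefixAt_spec hπ h0 hv).2.1

lemma leftOf_lt_leftOf {k v w : ℕ} (hv : v ∈ colSeqAt π (k + 2)) (hw : w ∈ colSeqAt π (k + 2))
    (hwv : w < v) : leftOf π w < leftOf π v := by
  obtain ⟨hvlt, hvmem, hvmax, -⟩ := blockIdx_prefixAt_spec hπ h0 hv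
  obtain ⟨hwlt, -, hwmax, hwdom⟩ := blockIdx_prefixAt_spec hπ h0 hw
  have hidx : blockIdx (prefixAt π (k + 1)) v < blockIdx (prefixAt π (k + 1)) w := by
    rcases lt_trichotomy (blockIdx (prefixAt π (k + 1)) v) (blockIdx (prefixAt π (k + 1)) w)
      with h | h | h
    · exact h
    · rw [h] at hvmax; omega
    · exact absurd (hwdom _ h v hvmem) hwv.asymm
  rw [leftOf_eq hπ h0 hv, leftOf_eq hπ h0 hw, List.getD_eq_getElem (colSeqAt π (k + 1)) 0 hvlt,
    List.getD_eq_getElem (colSeqAt π (k + 1)) 0 hwlt]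
  exact List.pairwise_iff_getElem.mp (rtlMax_pairwise _) _ _ hvlt hwlt hidx

lemma rowOf_leftOf {k v : ℕ} (hv : v ∈ colSeqAt π (k + 2)) :
    rowOf π (leftOf π v) = rowOf π v := by
  rw [rowOf, rowOf, colOf_eq_of_mem_colSeqAt hπ h0 (leftOf_mem_colSeqAt hπ h0 hv),
    colOf_eq_of_mem_colSeqAt hπ h0 hv]
  rfl

lemma rowOf_eq_of_mem_colSeqAt_one {v : ℕ} (hv : v ∈ colSeqAt π 1) :
    rowOf π v = (colSeqAt π 1).idxOf v + 1 := by
  rw [rowOf, colOf_eq_of_mem_colSeqAt hπ h0 (k := 0) hv, Function.iterate_zero_apply, colposOf,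
    colOf_eq_of_mem_colSeqAt hπ h0 (k := 0) hv]

lemma rowOf_lt_rowOf {k v w : ℕ} (hv : v ∈ colSeqAt π (k + 1)) (hw : w ∈ colSeqAt π (k + 1))
    (hwv : w < v) : rowOf π v < rowOf π w := by
  induction k generalizing v w with
  | zero =>
    rw [rowOf_eq_of_mem_colSeqAt_one hπ h0 hv, rowOf_eq_of_mem_colSeqAt_one hπ h0 hw]
    exact Nat.succ_lt_succ (idxOf_lt_idxOf_of_pairwise_gt (rtlMax_pairwise _) hv hw hwv)
  | succ k ih =>
    rw [← rowOf_leftOf hπ h0 hv, ← rowOf_leftOf hπ h0 hw]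
    exact ih (leftOf_mem_colSeqAt hπ h0 hv) (leftOf_mem_colSeqAt hπ h0 hw)
      (leftOf_lt_leftOf hπ h0 hv hw hwv)

lemma leftOf_iterate {k v : ℕ} (d : ℕ) (hv : v ∈ colSeqAt π (k + d + 1)) :
    (leftOf π)^[d] v ∈ colSeqAt π (k + 1) ∧ v ≤ (leftOf π)^[d] v ∧
      rowOf π ((leftOf π)^[d] v) = rowOf π v := by
  induction d generalizing v with
  | zero => exact ⟨hv, le_rfl, rfl⟩
  | succ d ih =>
    obtain ⟨hmem, hle, hrow⟩ := ih (leftOf_mem_colSeqAt hπ h0 (k := k + d) hv)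
    rw [Function.iterate_succ_apply]
    exact ⟨hmem, (le_leftOf hπ h0 hv).trans hle, hrow.trans (rowOf_leftOf hπ h0 hv)⟩

end Tableau

/-- Theorem 3.16: if `T_π(i) ≥_D T_π(j)` then `i ≥ j`. -/
theorem stmt_11 (n : ℕ) (π : List ℕ) (hπ : π.Perm (List.range (n + 1)))
    (h0 : π.getLast? = some 0) (i j : ℕ) (hi1 : 1 ≤ i) (hin : i ≤ n)
    (hj1 : 1 ≤ j) (hjn : j ≤ n)
    (h : colOf π i ≤ colOf π j ∧ rowOf π i ≤ rowOf π j) :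
    j ≤ i := by
  have hnd : π.Nodup := hπ.nodup_iff.mpr List.nodup_range
  have hmem : ∀ v, 1 ≤ v → v ≤ n → v ∈ prefixAt π 1 := fun v hv1 hvn =>
    mem_prefixAt_one hnd h0 (hπ.mem_iff.mpr (List.mem_range.mpr (by omega))) (by omega)
  obtain ⟨a, ha⟩ := exists_mem_colSeqAt hnd h0 (k := 0) (hmem i hi1 hin)
  obtain ⟨b, hb⟩ := exists_mem_colSeqAt hnd h0 (k := 0) (hmem j hj1 hjn)
  rw [colOf_eq_of_mem_colSeqAt hnd h0 ha, colOf_eq_of_mem_colSeqAt hnd h0 hb] at h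
  obtain ⟨d, rfl⟩ := Nat.exists_eq_add_of_le (Nat.le_of_add_le_add_right h.1)
  obtain ⟨hw, hjw, hrow⟩ := leftOf_iterate hnd h0 d hb
  by_contra! hij
  have := rowOf_lt_rowOf hnd h0 hw ha (hij.trans_le hjw)
  omega
end

section
/- Let π ∈ S_n'. For all i ∈ {1,...,n}: col_π(i) = col_{α_π}(T_π(i)); row_π(i) = row_{α_π}(T_π(i)); colpos_π(i) = colpos_{α_π}(T_π(i)); if col_π(i) > 1, then T_π(leftof_π(i)) = leftof_{α_π}(T_π(i)); and if colpos_π(i) > 1, then T_π(upof_π(i)) = upof_{α_π}(T_π(i)). -/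
/-!
Write `s^{i-1}(π) = P_i 0 Q_i`. Since `Q_i` is increasing, one more application of `s` sorts
each block `b_{π,i,j}` of `P_i` in place and moves the column `C_{π,i}` (the right-to-left
maxima of `P_i`) behind the `0`. So every entry lies in exactly one column, and `C_{π,i+1}`
consists of the maxima of those blocks that dominate all later blocks; `leftof` therefore maps
column `i + 1` order-preservingly into column `i`, and rows increase down every column. Hence
the entries of row `j` occupy the first `α_j` columns, i.e. `(i, j) ∈ D(α_π)` exactly when column
`i` has an entry in row `j`, and the cells above `T_π(v)` in its column are the images of the
entries above `v` in `C_{π,i}`, which gives `colpos` and `upof`.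
-/

namespace StackSorting

lemma le_foldr_max {l : List ℕ} {x : ℕ} (h : x ∈ l) : x ≤ l.foldr max 0 :=
  List.le_max_of_le h le_rfl

lemma foldr_max_mem {l : List ℕ} (hl : l ≠ []) : l.foldr max 0 ∈ l := by
  obtain ⟨x, xs, rfl⟩ := List.exists_cons_of_ne_nil hl
  exact foldrMaxMem x xs

lemma foldr_max_append_cons {L R : List ℕ} {m : ℕ} (hL : ∀ x ∈ L, x < m)
    (hR : ∀ x ∈ R, x < m) : (L ++ m :: R).foldr max 0 = m := by
  refine le_antisymm (List.max_le_of_forall_le _ _ fun x hx => ?_) (le_foldr_max (by simp))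
  simp only [List.mem_append, List.mem_cons] at hx
  rcases hx with hx | rfl | hx
  exacts [(hL x hx).le, le_rfl, (hR x hx).le]

lemma takeWhile_ne_append_cons {L R : List ℕ} {m : ℕ} (h : m ∉ L) :
    (L ++ m :: R).takeWhile (· ≠ m) = L := by
  rw [List.takeWhile_append_of_pos (by grind)]
  simp

lemma dropWhile_ne_append_cons {L R : List ℕ} {m : ℕ} (h : m ∉ L) :
    (L ++ m :: R).dropWhile (· ≠ m) = m :: R := by
  rw [List.dropWhile_append_of_pos (by grind)]
  simp

lemma takeWhile_append_cons_dropWhile {l : List ℕ} {m : ℕ} (hm : m ∈ l) :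
    l.takeWhile (· ≠ m) ++ m :: (l.dropWhile (· ≠ m)).drop 1 = l := by
  induction l with
  | nil => simp at hm
  | cons a t ih =>
    by_cases h : a = m
    · simp [h]
    · simpa [h] using ih (by simpa [Ne.symm h] using hm)

lemma ss_append_cons {L R : List ℕ} {m : ℕ} (hL : ∀ x ∈ L, x < m)
    (hR : ∀ x ∈ R, x < m) :
    ss (L ++ m :: R) = ss L ++ ss R ++ [m] := by
  obtain ⟨x, xs, hx⟩ := List.exists_cons_of_ne_nil (l := L ++ m :: R) (by simp)
  have hmL : m ∉ L := fun h => (hL m h).false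
  rw [hx, ss, ← hx, foldr_max_append_cons hL hR, takeWhile_ne_append_cons hmL,
    dropWhile_ne_append_cons hmL, List.drop_one, List.tail_cons]

lemma ss_perm (l : List ℕ) : (ss l).Perm l := by
  induction l using ss.induct with
  | case1 => simp [ss]
  | case2 x xs ihT ihD =>
    rw [ss]
    set m := (x :: xs).foldr max 0
    conv_rhs => rw [← takeWhile_append_cons_dropWhile (foldrMaxMem x xs)]
    exact ((ihT.append ihD).append_right [m]).trans
      (List.perm_append_singleton _ _ |>.trans List.perm_middle.symm)

lemma mem_ss {l : List ℕ} {x : ℕ} : x ∈ ss l ↔ x ∈ l := (ss_perm l).mem_iff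

lemma iterate_ss_perm (l : List ℕ) (k : ℕ) : (ss^[k] l).Perm l := by
  induction k with
  | zero => rfl
  | succ k ih => rw [Function.iterate_succ_apply']; exact (ss_perm _).trans ih

lemma exists_append_cons_foldr_max {l : List ℕ} (hl : l ≠ []) (hnd : l.Nodup) :
    ∃ L R, l = L ++ l.foldr max 0 :: R ∧
      (∀ x ∈ L, x < l.foldr max 0) ∧ (∀ x ∈ R, x < l.foldr max 0) := by
  set m := l.foldr max 0
  obtain ⟨L, R, hLR⟩ := List.append_of_mem (foldr_max_mem hl)
  have hm := hnd
  rw [hLR, List.nodup_middle, List.nodup_cons] at hm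
  have hlt : ∀ x ∈ L ++ R, x < m := fun x hx =>
    lt_of_le_of_ne (le_foldr_max (by rw [hLR]; simp at hx ⊢; tauto))
      (by rintro rfl; exact hm.1 hx)
  exact ⟨L, R, hLR, fun x hx => hlt x (by simp [hx]), fun x hx => hlt x (by simp [hx])⟩

lemma rtlMax_sublist (l : List ℕ) : (rtlMax l).Sublist l := by
  induction l with
  | nil => simp [rtlMax]
  | cons a t ih =>
    rw [rtlMax]
    split_ifs
    exacts [ih.cons_cons a, ih.cons a]

lemma rtlMax_pairwise (l : List ℕ) : (rtlMax l).Pairwise (· > ·) := by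
  induction l with
  | nil => simp [rtlMax]
  | cons a t ih =>
    rw [rtlMax]
    split_ifs with h
    · exact List.pairwise_cons.2 ⟨fun b hb => h b ((rtlMax_sublist t).subset hb), ih⟩
    · exact ih

lemma rtlMax_ne_nil {l : List ℕ} (h : l ≠ []) : rtlMax l ≠ [] := by
  induction l with
  | nil => exact absurd rfl h
  | cons a t ih =>
    rw [rtlMax]
    split_ifs with hd
    · simp
    · exact ih (by rintro rfl; simp at hd)

lemma rtlMax_append (xs ys : List ℕ) :
    rtlMax (xs ++ ys) = (rtlMax xs).filter (fun x => ∀ y ∈ ys, y < x) ++ rtlMax ys := by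
  induction xs with
  | nil => simp [rtlMax]
  | cons a t ih =>
    simp only [List.cons_append, rtlMax, ih, List.forall_mem_append]
    split_ifs <;> simp_all

lemma rtlMax_append_cons {L R : List ℕ} {m : ℕ} (hL : ∀ x ∈ L, x < m)
    (hR : ∀ x ∈ R, x < m) :
    rtlMax (L ++ m :: R) = m :: rtlMax R := by
  have hnil : (rtlMax L).filter (fun x => ∀ y ∈ m :: R, y < x) = [] :=
    List.filter_eq_nil_iff.2 fun x hx h =>
      (hL x ((rtlMax_sublist L).subset hx)).asymm (of_decide_eq_true h m (by simp))
  rw [rtlMax_append, hnil, List.nil_append, rtlMax, if_pos hR]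

lemma rtlMax_ss {l : List ℕ} (hl : l ≠ []) (hnd : l.Nodup) :
    rtlMax (ss l) = [l.foldr max 0] := by
  set m := l.foldr max 0
  obtain ⟨L, R, hLR, hL, hR⟩ := exists_append_cons_foldr_max hl hnd
  have hlt : ∀ x ∈ ss L ++ ss R, x < m := by
    simp only [List.mem_append, mem_ss]
    rintro x (hx | hx)
    exacts [hL x hx, hR x hx]
  rw [hLR, ss_append_cons hL hR, rtlMax_append_cons hlt (by simp)]
  rfl

lemma length_blocksOf (l : List ℕ) : (blocksOf l).length = (rtlMax l).length := by
  induction l with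
  | nil => rfl
  | cons a t ih =>
    rw [blocksOf, rtlMax]
    split_ifs with h
    · simp [ih]
    · have hne : blocksOf t ≠ [] := by
        rw [← List.length_pos_iff, ih, List.length_pos_iff]
        exact rtlMax_ne_nil (by rintro rfl; simp at h)
      obtain ⟨b, bs, hb⟩ := List.exists_cons_of_ne_nil hne
      rw [hb] at ih ⊢
      exact ih

lemma flatten_blocksOf_append_rtlMax_perm (l : List ℕ) :
    ((blocksOf l).flatten ++ rtlMax l).Perm l := by
  induction l with
  | nil => rfl
  | cons a t ih =>
    rw [blocksOf, rtlMax]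
    split_ifs with h
    · exact List.perm_middle.trans (ih.cons a)
    · obtain ⟨b, bs, hb⟩ := List.exists_cons_of_ne_nil (l := blocksOf t) (by
        rw [← List.length_pos_iff, length_blocksOf, List.length_pos_iff]
        exact rtlMax_ne_nil (by rintro rfl; simp at h))
      rw [hb] at ih ⊢
      exact ih.cons a

lemma mem_flatten_blocksOf {l : List ℕ} (hnd : l.Nodup) {v : ℕ} :
    v ∈ (blocksOf l).flatten ↔ v ∈ l ∧ v ∉ rtlMax l := by
  have hperm := flatten_blocksOf_append_rtlMax_perm l
  have hdisj := List.disjoint_of_nodup_append (hperm.nodup_iff.2 hnd)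
  rw [← hperm.mem_iff, List.mem_append]
  exact ⟨fun h => ⟨Or.inl h, hdisj h⟩, fun ⟨h, h'⟩ => h.resolve_right h'⟩

lemma nodup_flatten_blocksOf {l : List ℕ} (hnd : l.Nodup) : (blocksOf l).flatten.Nodup :=
  ((flatten_blocksOf_append_rtlMax_perm l).nodup_iff.2 hnd).of_append_left

lemma blocksOf_append_cons {L R : List ℕ} {m : ℕ} (hL : ∀ x ∈ L, x < m)
    (hR : ∀ x ∈ R, x < m) :
    blocksOf (L ++ m :: R) = L :: blocksOf R := by
  induction L with
  | nil => rw [List.nil_append, blocksOf, if_pos hR]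
  | cons a t ih =>
    rw [List.cons_append, blocksOf, if_neg fun h => (hL a (by simp)).asymm (h m (by simp)),
      ih fun x hx => hL x (by simp [hx])]

lemma mem_flatten_map_ss {bs : List (List ℕ)} {x : ℕ} :
    x ∈ (bs.map ss).flatten ↔ x ∈ bs.flatten := by
  simp [List.mem_flatten, mem_ss]

lemma exists_of_mem_rtlMax_flatten_map_ss {bs : List (List ℕ)} (hnd : bs.flatten.Nodup)
    {v : ℕ} (hv : v ∈ rtlMax (bs.map ss).flatten) :
    ∃ j, ∃ hj : j < bs.length, bs[j] ≠ [] ∧ bs[j].foldr max 0 = v ∧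
      ∀ j' (hj' : j' < bs.length), j < j' → ∀ y ∈ bs[j'], y < v := by
  induction bs with
  | nil => simp [rtlMax] at hv
  | cons b t ih =>
    rw [List.flatten_cons, List.nodup_append] at hnd
    rw [List.map_cons, List.flatten_cons, rtlMax_append, List.mem_append, List.mem_filter] at hv
    rcases hv with ⟨hvb, hdom⟩ | hv
    · have hb : b ≠ [] := by rintro rfl; simp [ss, rtlMax] at hvb
      rw [rtlMax_ss hb hnd.1, List.mem_singleton] at hvb
      subst hvb
      refine ⟨0, by simp, hb, rfl, fun j' hj' hjj' y hy => ?_⟩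
      obtain ⟨k, rfl⟩ := Nat.exists_eq_succ_of_ne_zero hjj'.ne'
      exact of_decide_eq_true hdom y
        (mem_flatten_map_ss.2 (List.mem_flatten_of_mem (List.getElem_mem _) hy))
    · obtain ⟨j, hj, hne, hmax, hdom⟩ := ih hnd.2.1 hv
      refine ⟨j + 1, by simpa using hj, by simpa using hne, by simpa using hmax, ?_⟩
      intro j' hj' hjj' y hy
      obtain ⟨k, rfl⟩ := Nat.exists_eq_succ_of_ne_zero (by omega : j' ≠ 0)
      exact hdom k (by simpa using hj') (by omega) y (by simpa using hy)

lemma idxOf_map_foldr_max {bs : List (List ℕ)} (hnd : bs.flatten.Nodup) {j : ℕ}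
    (hj : j < bs.length) (hne : bs[j] ≠ []) (hpos : 0 < bs[j].foldr max 0) :
    (bs.map (fun b => b.foldr max 0)).idxOf (bs[j].foldr max 0) = j := by
  have hdisj := List.pairwise_iff_getElem.1 (List.nodup_flatten.1 hnd).2
  refine (List.findIdx_eq (by simpa using hj)).2 ⟨by simp, fun j' hj' => ?_⟩
  simp only [List.getElem_map, beq_eq_false_iff_ne]
  intro heq
  by_cases hne' : bs[j'] = []
  · rw [hne'] at heq
    exact hpos.ne heq
  · exact hdisj j' j _ hj hj' (heq ▸ foldr_max_mem hne') (foldr_max_mem hne)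

lemma pairwise_append_singleton {Q : List ℕ} {m : ℕ} (hQ : Q.Pairwise (· < ·))
    (hm : ∀ x ∈ Q, x < m) : (Q ++ [m]).Pairwise (· < ·) :=
  List.pairwise_append.2 ⟨hQ, by simp, fun x hx y hy => List.mem_singleton.1 hy ▸ hm x hx⟩

def SortsBlockwise (P Q : List ℕ) : Prop :=
  ∃ Q', ss (P ++ 0 :: Q) = ((blocksOf P).map ss).flatten ++ 0 :: Q' ∧ Q'.Pairwise (· < ·)

lemma SortsBlockwise.append_singleton {P Q : List ℕ} {q : ℕ} (h : SortsBlockwise P Q)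
    (hq : ∀ x ∈ P ++ 0 :: Q, x < q) : SortsBlockwise P (Q ++ [q]) := by
  obtain ⟨Q', hss, hQ'⟩ := h
  refine ⟨Q' ++ [q], ?_, pairwise_append_singleton hQ' fun x hx => hq x (mem_ss.1 ?_)⟩
  · have := ss_append_cons hq (R := []) (by simp)
    simp only [List.append_assoc, List.cons_append] at this hss ⊢
    rw [this, hss]
    simp [ss]
  · rw [hss]
    simp [hx]

lemma SortsBlockwise.append_cons {L P Q : List ℕ} {m : ℕ} (h : SortsBlockwise P Q)
    (hL : ∀ x ∈ L, x < m) (hm : ∀ x ∈ P ++ 0 :: Q, x < m) :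
    SortsBlockwise (L ++ m :: P) Q := by
  obtain ⟨Q', hss, hQ'⟩ := h
  refine ⟨Q' ++ [m], ?_, pairwise_append_singleton hQ' fun x hx => hm x (mem_ss.1 ?_)⟩
  · rw [List.append_assoc, List.cons_append, ss_append_cons hL hm, hss,
      blocksOf_append_cons hL fun x hx => hm x (by simp [hx])]
    simp
  · rw [hss]
    simp [hx]

/-- The maximum of `P 0 Q` is either the maximum of `P` or the last entry of `Q`; removing it
reduces to a shorter instance. -/
theorem sortsBlockwise {P Q : List ℕ} (hnd : (P ++ 0 :: Q).Nodup) (hQ : Q.Pairwise (· < ·)) :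
    SortsBlockwise P Q := by
  induction hlen : P.length + Q.length using Nat.strong_induction_on generalizing P Q with
  | _ N ih =>
  have hpos : ∀ x ∈ P ++ Q, 0 < x := fun x hx => Nat.pos_of_ne_zero <| by
    rintro rfl
    exact (List.nodup_cons.1 (List.nodup_middle.1 hnd)).1 hx
  have of_lt_foldr_max (hP : P ≠ []) (hPQ : ∀ y ∈ Q, y < P.foldr max 0) :
      SortsBlockwise P Q := by
    obtain ⟨P₁, P₂, hP₁₂, h₁, h₂⟩ :=
      exists_append_cons_foldr_max hP (hnd.sublist (by simp))
    generalize P.foldr max 0 = m at hPQ hP₁₂ h₁ h₂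
    subst hP₁₂
    have hm : 0 < m := hpos m (by simp)
    have hR : ∀ x ∈ P₂ ++ 0 :: Q, x < m := by
      simp only [List.mem_append, List.mem_cons]
      rintro x (hx | rfl | hx)
      exacts [h₂ x hx, hm, hPQ x hx]
    rw [List.append_assoc, List.cons_append] at hnd
    exact (ih _ (by rw [← hlen]; simp; omega)
      (List.nodup_cons.1 (List.nodup_append.1 hnd).2.1).2 hQ rfl).append_cons h₁ hR
  rcases List.eq_nil_or_concat' Q with rfl | ⟨Q₀, q, rfl⟩
  · rcases eq_or_ne P [] with rfl | hP
    · exact ⟨[], by simp [blocksOf, ss], by simp⟩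
    · exact of_lt_foldr_max hP (by simp)
  have hQ₀ : ∀ x ∈ Q₀, x < q := fun x hx => (List.pairwise_append.1 hQ).2.2 x hx q (by simp)
  by_cases hPq : ∀ x ∈ P, x < q
  · have hL : ∀ x ∈ P ++ 0 :: Q₀, x < q := by
      simp only [List.mem_append, List.mem_cons]
      rintro x (hx | rfl | hx)
      exacts [hPq x hx, hpos q (by simp), hQ₀ x hx]
    exact (ih _ (by rw [← hlen]; simp) (hnd.sublist (by simp))
      (List.pairwise_append.1 hQ).1 rfl).append_singleton hL
  · simp only [not_forall, not_lt] at hPq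
    obtain ⟨x, hxP, hqx⟩ := hPq
    have hqx' : q < x := lt_of_le_of_ne hqx <| by
      rintro rfl
      exact (List.nodup_append.1 hnd).2.2 q hxP q (by simp) rfl
    have hq : q < P.foldr max 0 := hqx'.trans_le (le_foldr_max hxP)
    refine of_lt_foldr_max (List.ne_nil_of_mem hxP) fun y hy => ?_
    rcases List.mem_append.1 hy with hy | hy
    · exact (hQ₀ y hy).trans hq
    · exact List.mem_singleton.1 hy ▸ hq

lemma not_mem_of_nodup_append_cons {P Q : List ℕ} {z : ℕ} (h : (P ++ z :: Q).Nodup) : z ∉ P :=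
  fun hz => (List.nodup_cons.1 (List.nodup_middle.1 h)).1 (List.mem_append_left _ hz)

lemma prefixAt_of_iterate_eq {π P Q : List ℕ} {i : ℕ} (h : ss^[i - 1] π = P ++ 0 :: Q)
    (hP : 0 ∉ P) : prefixAt π i = P := by
  rw [prefixAt, h, takeWhile_ne_append_cons hP]

section Columns

variable {π : List ℕ} (hnd : π.Nodup) (h0 : π.getLast? = some 0)
include hnd

lemma iterate_ss_nodup (k : ℕ) : (ss^[k] π).Nodup := (iterate_ss_perm π k).nodup_iff.2 hnd

lemma exists_iterate_ss_succ {i : ℕ} (hi : 1 ≤ i) {Q : List ℕ}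
    (hQ : ss^[i - 1] π = prefixAt π i ++ 0 :: Q) (hsort : Q.Pairwise (· < ·)) :
    ∃ Q', ss^[i + 1 - 1] π = ((blocksAt π i).map ss).flatten ++ 0 :: Q' ∧
      Q'.Pairwise (· < ·) := by
  obtain ⟨Q', hss, hsort'⟩ := sortsBlockwise (hQ ▸ iterate_ss_nodup hnd (i - 1)) hsort
  refine ⟨Q', ?_, hsort'⟩
  rw [show i + 1 - 1 = i - 1 + 1 by omega, Function.iterate_succ_apply', hQ, hss, blocksAt]

include h0

lemma exists_iterate_ss_eq_prefixAt {i : ℕ} (hi : 1 ≤ i) :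
    ∃ Q, ss^[i - 1] π = prefixAt π i ++ 0 :: Q ∧ Q.Pairwise (· < ·) := by
  induction i, hi using Nat.le_induction with
  | base =>
    obtain ⟨P, hP⟩ := List.getLast?_eq_some_iff.1 h0
    have h1 : ss^[1 - 1] π = P ++ 0 :: [] := hP
    rw [prefixAt_of_iterate_eq h1 (not_mem_of_nodup_append_cons (hP ▸ hnd))]
    exact ⟨[], h1, List.Pairwise.nil⟩
  | succ i hi ih =>
    obtain ⟨Q, hQ, hsort⟩ := ih
    obtain ⟨Q', h1, hsort'⟩ := exists_iterate_ss_succ hnd hi hQ hsort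
    rw [prefixAt_of_iterate_eq h1
      (not_mem_of_nodup_append_cons (h1 ▸ iterate_ss_nodup hnd _))]
    exact ⟨Q', h1, hsort'⟩

lemma prefixAt_succ {i : ℕ} (hi : 1 ≤ i) :
    prefixAt π (i + 1) = ((blocksAt π i).map ss).flatten := by
  obtain ⟨Q, hQ, hsort⟩ := exists_iterate_ss_eq_prefixAt hnd h0 hi
  obtain ⟨Q', h1, -⟩ := exists_iterate_ss_succ hnd hi hQ hsort
  exact prefixAt_of_iterate_eq h1 (not_mem_of_nodup_append_cons (h1 ▸ iterate_ss_nodup hnd _))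

lemma prefixAt_nodup {i : ℕ} (hi : 1 ≤ i) : (prefixAt π i).Nodup := by
  obtain ⟨Q, hQ, -⟩ := exists_iterate_ss_eq_prefixAt hnd h0 hi
  exact (hQ ▸ iterate_ss_nodup hnd (i - 1)).sublist (by simp)

lemma pos_of_mem_prefixAt {i : ℕ} (hi : 1 ≤ i) {v : ℕ} (hv : v ∈ prefixAt π i) :
    0 < v := by
  obtain ⟨Q, hQ, -⟩ := exists_iterate_ss_eq_prefixAt hnd h0 hi
  exact Nat.pos_of_ne_zero fun h =>
    not_mem_of_nodup_append_cons (hQ ▸ iterate_ss_nodup hnd (i - 1)) (h ▸ hv)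

lemma mem_prefixAt_one {v : ℕ} (hv : v ∈ π) (hv0 : v ≠ 0) : v ∈ prefixAt π 1 := by
  obtain ⟨P, rfl⟩ := List.getLast?_eq_some_iff.1 h0
  rw [prefixAt_of_iterate_eq (P := P) (Q := []) rfl (not_mem_of_nodup_append_cons hnd)]
  simpa [hv0] using hv

lemma mem_prefixAt_succ {i : ℕ} (hi : 1 ≤ i) {v : ℕ} :
    v ∈ prefixAt π (i + 1) ↔ v ∈ prefixAt π i ∧ v ∉ colSeqAt π i := by
  rw [prefixAt_succ hnd h0 hi, mem_flatten_map_ss, blocksAt,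
    mem_flatten_blocksOf (prefixAt_nodup hnd h0 hi), colSeqAt]

lemma length_prefixAt_succ {i : ℕ} (hi : 1 ≤ i) :
    (prefixAt π (i + 1)).length + (colSeqAt π i).length = (prefixAt π i).length := by
  have hlen : ∀ bs : List (List ℕ), ((bs.map ss).flatten).length = bs.flatten.length := by
    intro bs
    simp [List.length_flatten, Function.comp_def, (ss_perm _).length_eq]
  rw [prefixAt_succ hnd h0 hi, hlen, blocksAt, colSeqAt, ← List.length_append,
    (flatten_blocksOf_append_rtlMax_perm _).length_eq]

lemma not_mem_prefixAt_of_mem_colSeqAt {i j : ℕ} (hi : 1 ≤ i) (hij : i < j) {v : ℕ}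
    (hv : v ∈ colSeqAt π i) : v ∉ prefixAt π j := by
  induction j, hij using Nat.le_induction with
  | base => exact fun h => ((mem_prefixAt_succ hnd h0 hi).1 h).2 hv
  | succ j hij ih =>
    exact fun h => ih ((mem_prefixAt_succ hnd h0 (by omega)).1 h).1

lemma colOf_eq {i v : ℕ} (hi : 1 ≤ i) (hv : v ∈ colSeqAt π i) : colOf π v = i := by
  refine le_antisymm (Nat.sInf_le ⟨hi, hv⟩) (le_csInf ⟨i, hi, hv⟩ ?_)
  rintro j ⟨hj, hvj⟩
  by_contra! hji
  exact not_mem_prefixAt_of_mem_colSeqAt hnd h0 hj hji hvj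
    ((rtlMax_sublist _).subset hv)

lemma exists_mem_colSeqAt {v : ℕ} (hv : v ∈ prefixAt π 1) :
    ∃ i, 1 ≤ i ∧ v ∈ colSeqAt π i := by
  by_contra! hcol
  have hstay : ∀ i, 1 ≤ i →
      v ∈ prefixAt π i ∧ (prefixAt π i).length + i ≤ (prefixAt π 1).length + 1 := by
    intro i hi
    induction i, hi using Nat.le_induction with
    | base => exact ⟨hv, le_rfl⟩
    | succ i hi ih =>
      have hC : colSeqAt π i ≠ [] := rtlMax_ne_nil (List.ne_nil_of_mem ih.1)
      have := length_prefixAt_succ hnd h0 hi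
      have := List.length_pos_iff.2 hC
      exact ⟨(mem_prefixAt_succ hnd h0 hi).2 ⟨ih.1, hcol i hi⟩, by omega⟩
  have := hstay ((prefixAt π 1).length + 2) (by omega)
  omega

end Columns

lemma idxOf_lt_idxOf_of_pairwise_gt {l : List ℕ} (hl : l.Pairwise (· > ·)) {u v : ℕ}
    (hu : u ∈ l) (hv : v ∈ l) (hvu : v < u) : l.idxOf u < l.idxOf v := by
  have hu' := List.idxOf_lt_length_iff.2 hu
  have hv' := List.idxOf_lt_length_iff.2 hv
  by_contra! h
  rcases h.lt_or_eq with h | h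
  · have := List.pairwise_iff_getElem.1 hl _ _ hv' hu' h
    rw [List.getElem_idxOf, List.getElem_idxOf] at this
    exact this.asymm hvu
  · have := List.getElem_idxOf hv'
    simp only [h, List.getElem_idxOf] at this
    exact hvu.ne this.symm

section Rows

variable {π : List ℕ} (hnd : π.Nodup) (h0 : π.getLast? = some 0)
include hnd h0

lemma exists_leftOf_eq {i v : ℕ} (hi : 1 ≤ i) (hv : v ∈ colSeqAt π (i + 1)) :
    ∃ j, ∃ hj : j < (colSeqAt π i).length, leftOf π v = (colSeqAt π i)[j] ∧
      ∃ hjB : j < (blocksAt π i).length, (blocksAt π i)[j] ≠ [] ∧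
        (blocksAt π i)[j].foldr max 0 = v ∧
        ∀ j' (hj' : j' < (blocksAt π i).length), j < j' →
          ∀ y ∈ (blocksAt π i)[j'], y < v := by
  have hndB : (blocksAt π i).flatten.Nodup := nodup_flatten_blocksOf (prefixAt_nodup hnd h0 hi)
  have hcol := colOf_eq hnd h0 (by omega) hv
  rw [colSeqAt, prefixAt_succ hnd h0 hi] at hv
  obtain ⟨j, hjB, hne, hmax, hdom⟩ := exists_of_mem_rtlMax_flatten_map_ss hndB hv
  have hjC : j < (colSeqAt π i).length := by rwa [colSeqAt, ← length_blocksOf]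
  have hpos : 0 < v := pos_of_mem_prefixAt hnd h0 hi <| (mem_flatten_blocksOf
    (prefixAt_nodup hnd h0 hi)).1 (List.mem_flatten_of_mem (List.getElem_mem hjB)
      (hmax ▸ foldr_max_mem hne)) |>.1
  refine ⟨j, hjC, ?_, hjB, hne, hmax, hdom⟩
  rw [leftOf, hcol, Nat.add_sub_cancel, ← hmax, idxOf_map_foldr_max hndB hjB hne (hmax ▸ hpos),
    List.getD_eq_getElem _ _ hjC]

lemma leftOf_mem_colSeqAt {i v : ℕ} (hi : 1 ≤ i) (hv : v ∈ colSeqAt π (i + 1)) :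
    leftOf π v ∈ colSeqAt π i := by
  obtain ⟨j, hj, hleft, -⟩ := exists_leftOf_eq hnd h0 hi hv
  exact hleft ▸ List.getElem_mem hj

lemma rowOf_leftOf {i v : ℕ} (hi : 1 ≤ i) (hv : v ∈ colSeqAt π (i + 1)) :
    rowOf π (leftOf π v) = rowOf π v := by
  rw [rowOf, rowOf, colOf_eq hnd h0 (by omega) hv,
    colOf_eq hnd h0 hi (leftOf_mem_colSeqAt hnd h0 hi hv),
    show i + 1 - 1 = i - 1 + 1 by omega, Function.iterate_succ_apply]

lemma rowOf_of_mem_colSeqAt_one {v : ℕ} (hv : v ∈ colSeqAt π 1) :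
    rowOf π v = (colSeqAt π 1).idxOf v + 1 := by
  simp [rowOf, colposOf, colOf_eq hnd h0 le_rfl hv]

lemma rowOf_lt_rowOf {i : ℕ} (hi : 1 ≤ i) {u v : ℕ} (hu : u ∈ colSeqAt π i)
    (hv : v ∈ colSeqAt π i) (hvu : v < u) : rowOf π u < rowOf π v := by
  induction i, hi using Nat.le_induction generalizing u v with
  | base =>
    rw [rowOf_of_mem_colSeqAt_one hnd h0 hu, rowOf_of_mem_colSeqAt_one hnd h0 hv]
    exact Nat.succ_lt_succ (idxOf_lt_idxOf_of_pairwise_gt (rtlMax_pairwise _) hu hv hvu)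
  | succ i hi ih =>
    obtain ⟨ju, hju, hleftu, hjuB, hneu, hmaxu, -⟩ := exists_leftOf_eq hnd h0 hi hu
    obtain ⟨jv, hjv, hleftv, hjvB, -, hmaxv, hdomv⟩ := exists_leftOf_eq hnd h0 hi hv
    -- `v` dominates every block after its own, so the block of `u` comes first
    have hj : ju < jv := by
      by_contra! h
      rcases h.lt_or_eq with h | rfl
      · exact (hdomv ju hjuB h u (hmaxu ▸ foldr_max_mem hneu)).asymm hvu
      · exact hvu.ne (hmaxv.symm.trans hmaxu)
    rw [← rowOf_leftOf hnd h0 hi hu, ← rowOf_leftOf hnd h0 hi hv, hleftu, hleftv]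
    exact ih (List.getElem_mem _) (List.getElem_mem _)
      (List.pairwise_iff_getElem.1 (rtlMax_pairwise _) _ _ hju hjv hj)

lemma eq_of_rowOf_eq {i : ℕ} (hi : 1 ≤ i) {u v : ℕ} (hu : u ∈ colSeqAt π i)
    (hv : v ∈ colSeqAt π i) (huv : rowOf π u = rowOf π v) : u = v := by
  by_contra h
  rcases Nat.lt_or_gt_of_ne h with h | h
  · exact (rowOf_lt_rowOf hnd h0 hi hv hu h).ne' huv
  · exact (rowOf_lt_rowOf hnd h0 hi hu hv h).ne huv

lemma exists_mem_colSeqAt_rowOf_eq {i i' v : ℕ} (hi' : 1 ≤ i') (hi'i : i' ≤ i)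
    (hv : v ∈ colSeqAt π i) : ∃ w ∈ colSeqAt π i', rowOf π w = rowOf π v := by
  induction i, hi'i using Nat.le_induction generalizing v with
  | base => exact ⟨v, hv, rfl⟩
  | succ i hi ih =>
    obtain ⟨w, hw, hrow⟩ := ih (leftOf_mem_colSeqAt hnd h0 (by omega) hv)
    exact ⟨w, hw, hrow.trans (rowOf_leftOf hnd h0 (by omega) hv)⟩

lemma rowOf_mem_Icc {i v : ℕ} (hi : 1 ≤ i) (hv : v ∈ colSeqAt π i) :
    rowOf π v ∈ Finset.Icc 1 (colSeqAt π 1).length := by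
  obtain ⟨w, hw, hrow⟩ := exists_mem_colSeqAt_rowOf_eq hnd h0 le_rfl hi hv
  rw [← hrow, rowOf_of_mem_colSeqAt_one hnd h0 hw, Finset.mem_Icc]
  exact ⟨by omega, List.idxOf_lt_length_iff.2 hw⟩

end Rows

section Tableau

variable {π : List ℕ} (hnd : π.Nodup) (h0 : π.getLast? = some 0)
include hnd h0

lemma rowOf_getD_strictMonoOn {i : ℕ} (hi : 1 ≤ i) :
    StrictMonoOn (fun j => rowOf π ((colSeqAt π i).getD j 0))
      (Set.Iio (colSeqAt π i).length) := by
  intro j hj j' hj' hjj'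
  simp only [Set.mem_Iio] at hj hj'
  simp only [List.getD_eq_getElem _ _ hj, List.getD_eq_getElem _ _ hj']
  exact rowOf_lt_rowOf hnd h0 hi (List.getElem_mem _) (List.getElem_mem _)
    (List.pairwise_iff_getElem.1 (rtlMax_pairwise _) _ _ hj hj' hjj')

lemma Tmap_leftOf {v : ℕ} (hv : v ∈ colSeqAt π (colOf π v)) (hcol : 1 < colOf π v) :
    Tmap π (leftOf π v) = leftA (Tmap π v) := by
  have hv' : v ∈ colSeqAt π (colOf π v - 1 + 1) := by rwa [Nat.sub_add_cancel hcol.le]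
  rw [Tmap, Tmap, leftA, colOf_eq hnd h0 (by omega) (leftOf_mem_colSeqAt hnd h0 (by omega) hv'),
    rowOf_leftOf hnd h0 (by omega) hv']

end Tableau

lemma sup_image_range_union_zero {f : ℕ → ℕ} {k : ℕ} (hk : 1 ≤ k)
    (hf : MonotoneOn f (Set.Iio k)) : ((Finset.range k).image f ∪ {0}).sup id = f (k - 1) := by
  refine le_antisymm (Finset.sup_le fun x hx => ?_)
    (Finset.le_sup (f := id) (Finset.mem_union_left _
      (Finset.mem_image_of_mem f (Finset.mem_range.2 (by omega)))))
  rcases Finset.mem_union.1 hx with hx | hx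
  · obtain ⟨j, hj, rfl⟩ := Finset.mem_image.1 hx
    rw [Finset.mem_range] at hj
    exact hf hj (show k - 1 < k by omega) (by omega)
  · rw [Finset.mem_singleton.1 hx]
    exact Nat.zero_le _

section Diagram

variable {n : ℕ} {π : List ℕ} (hπ : π.Perm (List.range (n + 1))) (h0 : π.getLast? = some 0)
include hπ h0

lemma mem_Icc_of_mem_colSeqAt {i v : ℕ} (hi : 1 ≤ i) (hv : v ∈ colSeqAt π i) :
    v ∈ Finset.Icc 1 n := by
  have hvP : v ∈ prefixAt π i := (rtlMax_sublist _).subset hv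
  have hvπ : v ∈ π :=
    (iterate_ss_perm π (i - 1)).subset ((List.takeWhile_sublist _).subset hvP)
  have h1 := List.mem_range.1 (hπ.subset hvπ)
  have h2 := pos_of_mem_prefixAt (hπ.nodup_iff.2 List.nodup_range) h0 hi hvP
  rw [Finset.mem_Icc]
  omega

lemma mem_colSeqAt_colOf {v : ℕ} (hv1 : 1 ≤ v) (hvn : v ≤ n) :
    1 ≤ colOf π v ∧ v ∈ colSeqAt π (colOf π v) := by
  have hnd := hπ.nodup_iff.2 List.nodup_range
  obtain ⟨i, hi, hvi⟩ := exists_mem_colSeqAt hnd h0 <|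
    mem_prefixAt_one (v := v) hnd h0 (hπ.mem_iff.2 (List.mem_range.2 (by omega))) (by omega)
  rw [colOf_eq hnd h0 hi hvi]
  exact ⟨hi, hvi⟩

omit h0 in
lemma alphaOf_getD {r : ℕ} (hr : r ∈ Finset.Icc 1 (colSeqAt π 1).length) :
    (alphaOf π).getD (r - 1) 0 = ((Finset.Icc 1 n).filter (fun w => rowOf π w = r)).card := by
  rw [Finset.mem_Icc] at hr
  rw [alphaOf, List.getD_eq_getElem _ _ (by simp; omega)]
  simp [hπ.length_eq, show 1 + (r - 1) = r by omega]

lemma le_card_filter_rowOf_eq {i w : ℕ} (hw : w ∈ colSeqAt π i) :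
    i ≤ ((Finset.Icc 1 n).filter (fun x => rowOf π x = rowOf π w)).card := by
  have hnd := hπ.nodup_iff.2 List.nodup_range
  have hsub : Finset.Icc 1 i ⊆
      ((Finset.Icc 1 n).filter (fun x => rowOf π x = rowOf π w)).image (colOf π) := by
    intro i' hi'
    obtain ⟨h1, h2⟩ := Finset.mem_Icc.1 hi'
    obtain ⟨w', hw', hrow⟩ := exists_mem_colSeqAt_rowOf_eq hnd h0 h1 h2 hw
    exact Finset.mem_image.2 ⟨w', Finset.mem_filter.2
      ⟨mem_Icc_of_mem_colSeqAt hπ h0 h1 hw', hrow⟩, colOf_eq hnd h0 h1 hw'⟩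
  simpa using (Finset.card_le_card hsub).trans Finset.card_image_le

/-- Distinct entries of a row lie in distinct columns, and `leftof` walks from the rightmost
of them back through every earlier column. -/
lemma exists_mem_colSeqAt_of_le_card {i r : ℕ} (hi : 1 ≤ i)
    (h : i ≤ ((Finset.Icc 1 n).filter (fun x => rowOf π x = r)).card) :
    ∃ w ∈ colSeqAt π i, rowOf π w = r := by
  have hnd := hπ.nodup_iff.2 List.nodup_range
  set F := (Finset.Icc 1 n).filter (fun x => rowOf π x = r)
  have hcol :
      ∀ x ∈ F, 1 ≤ colOf π x ∧ x ∈ colSeqAt π (colOf π x) ∧ rowOf π x = r := by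
    intro x hx
    obtain ⟨hxI, hxr⟩ := Finset.mem_filter.1 hx
    obtain ⟨h1, h2⟩ := Finset.mem_Icc.1 hxI
    exact ⟨(mem_colSeqAt_colOf hπ h0 h1 h2).1, (mem_colSeqAt_colOf hπ h0 h1 h2).2, hxr⟩
  obtain ⟨w, hwF, hmax⟩ := F.exists_max_image (colOf π) (Finset.card_pos.1 (by omega))
  obtain ⟨-, hwc, hwr⟩ := hcol w hwF
  have hinj : Set.InjOn (colOf π) F := fun a ha b hb hab => by
    obtain ⟨ha1, ha2, har⟩ := hcol a ha
    obtain ⟨-, hb2, hbr⟩ := hcol b hb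
    exact eq_of_rowOf_eq hnd h0 ha1 ha2 (hab ▸ hb2) (har.trans hbr.symm)
  have hsub : F.image (colOf π) ⊆ Finset.Icc 1 (colOf π w) := fun c hc => by
    obtain ⟨x, hx, rfl⟩ := Finset.mem_image.1 hc
    exact Finset.mem_Icc.2 ⟨(hcol x hx).1, hmax x hx⟩
  have hcard := Finset.card_le_card hsub
  rw [Finset.card_image_of_injOn hinj, Nat.card_Icc] at hcard
  obtain ⟨w', hw', hrow⟩ := exists_mem_colSeqAt_rowOf_eq hnd h0 hi (by omega) hwc
  exact ⟨w', hw', hrow.trans hwr⟩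

lemma inDiagram_alphaOf_iff {i r : ℕ} (hi : 1 ≤ i) :
    inDiagram (alphaOf π) (i, r) ↔ ∃ w ∈ colSeqAt π i, rowOf π w = r := by
  have hlen : (alphaOf π).length = (colSeqAt π 1).length := by simp [alphaOf]
  constructor
  · rintro ⟨-, hr1, hrl, hir⟩
    rw [hlen] at hrl
    rw [alphaOf_getD hπ (Finset.mem_Icc.2 ⟨hr1, hrl⟩)] at hir
    exact exists_mem_colSeqAt_of_le_card hπ h0 hi hir
  · rintro ⟨w, hw, rfl⟩
    have hr := rowOf_mem_Icc (hπ.nodup_iff.2 List.nodup_range) h0 hi hw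
    refine ⟨hi, (Finset.mem_Icc.1 hr).1, hlen ▸ (Finset.mem_Icc.1 hr).2, ?_⟩
    rw [alphaOf_getD hπ hr]
    exact le_card_filter_rowOf_eq hπ h0 hw

lemma filter_range_inDiagram_eq_image {i v : ℕ} (hi : 1 ≤ i) (hv : v ∈ colSeqAt π i) :
    (Finset.range (rowOf π v)).filter (fun r => inDiagram (alphaOf π) (i, r)) =
      (Finset.range ((colSeqAt π i).idxOf v)).image
        (fun j => rowOf π ((colSeqAt π i).getD j 0)) := by
  have hmono := rowOf_getD_strictMonoOn (hπ.nodup_iff.2 List.nodup_range) h0 hi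
  have hgetD {w : ℕ} (hw : w ∈ colSeqAt π i) :
      (colSeqAt π i).getD ((colSeqAt π i).idxOf w) 0 = w := by
    rw [List.getD_eq_getElem _ _ (List.idxOf_lt_length_iff.2 hw), List.getElem_idxOf]
  have hk : (colSeqAt π i).idxOf v ∈ Set.Iio (colSeqAt π i).length :=
    List.idxOf_lt_length_iff.2 hv
  ext r
  simp only [Finset.mem_filter, Finset.mem_range, Finset.mem_image, inDiagram_alphaOf_iff hπ h0 hi]
  constructor
  · rintro ⟨hr, w, hw, rfl⟩
    refine ⟨(colSeqAt π i).idxOf w, ?_, by simp only [hgetD hw]⟩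
    rw [← hmono.lt_iff_lt (List.idxOf_lt_length_iff.2 hw) hk]
    simpa only [hgetD hw, hgetD hv] using hr
  · rintro ⟨j, hj, rfl⟩
    have hj' : j ∈ Set.Iio (colSeqAt π i).length := lt_trans hj hk
    refine ⟨?_, _, List.getD_eq_getElem _ _ hj' ▸ List.getElem_mem hj', rfl⟩
    simpa only [hgetD hv] using hmono hj' hk hj

lemma colposA_alphaOf_Tmap {v : ℕ} (hv1 : 1 ≤ v) (hvn : v ≤ n) :
    colposA (alphaOf π) (Tmap π v) = colposOf π v := by
  obtain ⟨hi, hv⟩ := mem_colSeqAt_colOf hπ h0 hv1 hvn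
  have hmono := rowOf_getD_strictMonoOn (hπ.nodup_iff.2 List.nodup_range) h0 hi
  have hk := List.idxOf_lt_length_iff.2 hv
  rw [show Tmap π v = (colOf π v, rowOf π v) from rfl]
  dsimp only [colposA]
  rw [Finset.card_union_of_disjoint
      (Finset.disjoint_singleton_right.2 fun h => by simp [inDiagram] at h),
    filter_range_inDiagram_eq_image hπ h0 hi hv,
    Finset.card_image_of_injOn (hmono.injOn.mono (by simpa using hk.le)),
    Finset.card_range, Finset.card_singleton, colposOf]

lemma Tmap_upOf {v : ℕ} (hv1 : 1 ≤ v) (hvn : v ≤ n) (hpos : 1 < colposOf π v) :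
    Tmap π (upOf π v) = upA (alphaOf π) (Tmap π v) := by
  obtain ⟨hi, hv⟩ := mem_colSeqAt_colOf hπ h0 hv1 hvn
  have hmono := rowOf_getD_strictMonoOn (hπ.nodup_iff.2 List.nodup_range) h0 hi
  have hk := List.idxOf_lt_length_iff.2 hv
  rw [colposOf] at hpos
  have hup : upOf π v =
      (colSeqAt π (colOf π v)).getD ((colSeqAt π (colOf π v)).idxOf v - 1) 0 := by
    rw [upOf, colposOf]; rfl
  have hupmem : upOf π v ∈ colSeqAt π (colOf π v) := by
    rw [hup, List.getD_eq_getElem _ _ (by omega)]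
    exact List.getElem_mem _
  rw [show Tmap π v = (colOf π v, rowOf π v) from rfl, Tmap]
  dsimp only [upA]
  rw [colOf_eq (hπ.nodup_iff.2 List.nodup_range) h0 hi hupmem,
    filter_range_inDiagram_eq_image hπ h0 hi hv,
    sup_image_range_union_zero (by omega) (hmono.monotoneOn.mono (by simpa using hk.le)), hup]

end Diagram

end StackSorting

/-- Lemma 4.2: the permutation-level tableau data agrees with the composition-level
data of `α_π` through `T_π`. -/
theorem stmt_14 (n : ℕ) (π : List ℕ) (hπ : π.Perm (List.range (n + 1)))
    (h0 : π.getLast? = some 0) (v : ℕ) (hv1 : 1 ≤ v) (hvn : v ≤ n) :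
    colOf π v = (Tmap π v).1 ∧
    rowOf π v = (Tmap π v).2 ∧
    colposOf π v = colposA (alphaOf π) (Tmap π v) ∧
    (1 < colOf π v → Tmap π (leftOf π v) = leftA (Tmap π v)) ∧
    (1 < colposOf π v → Tmap π (upOf π v) = upA (alphaOf π) (Tmap π v)) := by
  obtain ⟨-, hv⟩ := StackSorting.mem_colSeqAt_colOf hπ h0 hv1 hvn
  exact ⟨rfl, rfl, (StackSorting.colposA_alphaOf_Tmap hπ h0 hv1 hvn).symm,
    StackSorting.Tmap_leftOf (hπ.nodup_iff.2 List.nodup_range) h0 hv,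
    StackSorting.Tmap_upOf hπ h0 hv1 hvn⟩
end
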